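/- Let v : ℝ → ℝ^d be continuous and suppose there exist points x_1 < … < x_m such that every component of v is affine on each of the m + 1 intervals (−∞, x_1], [x_1, x_2], …, [x_m, ∞). Then for any n ≥ 1, any weight vectors w_1, …, w_n ∈ ℝ^d, biases b_1, …, b_n ∈ ℝ, coefficients c_1, …, c_n ∈ ℝ, and constant c_0 ∈ ℝ, the function x ↦ Σ_{k=1}^{n} c_k σ(w_k · v(x) + b_k) + c_0 has at most (n + 1) m + n knots: the set of its points of non-differentiability has cardinality at most (n + 1) m + n. -/
import Mathlib


/-- The rectified linear unit `σ(x) = max(0, x)`. -/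
noncomputable def relu (x : ℝ) : ℝ := max 0 x

/-- For knot points `t 0 < t 1 < ⋯ < t (m-1)`, the `r`-th piece (`0 ≤ r ≤ m`) of the real
line: `(-∞, t 0]` for `r = 0`, `[t (r-1), t r]` for `0 < r < m`, and `[t (m-1), ∞)` for
`r = m` (all of `ℝ` if `m = 0`). -/
def piece (m : ℕ) (t : ℕ → ℝ) (r : ℕ) : Set ℝ :=
  {x | (1 ≤ r → t (r - 1) ≤ x) ∧ (r < m → x ≤ t r)}

lemma relu_diff {y : ℝ} (hy : y ≠ 0) : DifferentiableAt ℝ relu y := by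
  rcases lt_or_gt_of_ne hy with h | h
  · have h0 : relu =ᶠ[nhds y] fun _ => (0:ℝ) := by
      filter_upwards [Iio_mem_nhds h] with z hz
      simp [relu, max_eq_left (le_of_lt (Set.mem_Iio.mp hz))]
    exact (differentiableAt_const (0:ℝ)).congr_of_eventuallyEq h0
  · have h0 : relu =ᶠ[nhds y] id := by
      filter_upwards [Ioi_mem_nhds h] with z hz
      simp [relu, max_eq_right (le_of_lt (Set.mem_Ioi.mp hz))]
    exact differentiableAt_id.congr_of_eventuallyEq h0

lemma exists_nice (m : ℕ) (t : ℕ → ℝ) (x : ℝ) (hx : ∀ i < m, x ≠ t i) :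
    ∃ r ≤ m, ∃ U : Set ℝ, IsOpen U ∧ x ∈ U ∧ U ⊆ piece m t r := by
  by_cases hex : ∃ i, i < m ∧ x < t i
  · set r := Nat.find hex with hrdef
    obtain ⟨hrm, hxr⟩ := Nat.find_spec hex
    have hprev : ∀ i < r, t i < x := by
      intro i hi
      have := Nat.find_min hex hi
      push_neg at this
      exact lt_of_le_of_ne (this (lt_trans hi hrm)) (fun h => hx i (lt_trans hi hrm) h.symm)
    by_cases h1 : 1 ≤ r
    · refine ⟨r, hrm.le, Set.Ioo (t (r-1)) (t r), isOpen_Ioo,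
        ⟨hprev (r-1) (by omega), hxr⟩, ?_⟩
      intro y hy
      exact ⟨fun _ => hy.1.le, fun _ => hy.2.le⟩
    · refine ⟨r, hrm.le, Set.Iio (t r), isOpen_Iio, hxr, ?_⟩
      intro y hy
      exact ⟨fun h => absurd h h1, fun _ => hy.le⟩
  · push_neg at hex
    have hall : ∀ i < m, t i < x := fun i hi =>
      lt_of_le_of_ne (hex i hi) (fun h => hx i hi h.symm)
    by_cases hm : 1 ≤ m
    · refine ⟨m, le_refl m, Set.Ioi (t (m-1)), isOpen_Ioi, hall (m-1) (by omega), ?_⟩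
      intro y hy
      exact ⟨fun _ => hy.le, fun h => absurd h (lt_irrefl m)⟩
    · refine ⟨m, le_refl m, Set.univ, isOpen_univ, trivial, ?_⟩
      intro y _
      exact ⟨fun h => absurd (h.trans (by omega : m ≤ 0)) (by omega), fun h => absurd h (by omega)⟩

/-- **Layerwise knot recurrence `m_i ≤ (n_i + 1) m_{i-1} + n_i`.** Let `v : ℝ → ℝ^d` be
continuous, with every component affine on each of the `m + 1` pieces determined by
`t 0 < ⋯ < t (m-1)`. Then for any `n ≥ 1` ReLU neurons with weights `w k`, biases `b k`,
output coefficients `c k` and constant `c₀`, the function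
`x ↦ ∑_k c_k σ(w_k ⬝ v(x) + b_k) + c₀` has at most `(n + 1) m + n` knots. -/
theorem layer_knot_recurrence (d : ℕ) (v : ℝ → Fin d → ℝ) (hv : Continuous v)
    (m : ℕ) (t : ℕ → ℝ) (ht : ∀ i j, i < j → j < m → t i < t j)
    (haff : ∀ r ≤ m, ∀ j : Fin d, ∃ a c : ℝ, ∀ x ∈ piece m t r, v x j = a * x + c)
    (n : ℕ) (hn : 1 ≤ n)
    (w : Fin n → Fin d → ℝ) (b : Fin n → ℝ) (c : Fin n → ℝ) (c₀ : ℝ) :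
    {x : ℝ | ¬ DifferentiableAt ℝ
        (fun x => (∑ k, c k * relu ((∑ j, w k j * v x j) + b k)) + c₀) x}.Finite ∧
    {x : ℝ | ¬ DifferentiableAt ℝ
        (fun x => (∑ k, c k * relu ((∑ j, w k j * v x j) + b k)) + c₀) x}.ncard ≤
      (n + 1) * m + n := by
  classical
  choose! a ac hac using haff
  set A : ℕ → Fin n → ℝ := fun r k => ∑ j, w k j * a r j with hA
  set C : ℕ → Fin n → ℝ := fun r k => (∑ j, w k j * ac r j) + b k with hC
  have key : ∀ r ≤ m, ∀ k, ∀ x ∈ piece m t r,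
      (∑ j, w k j * v x j) + b k = A r k * x + C r k := by
    intro r hr k x hxp
    have : ∀ j, w k j * v x j = w k j * a r j * x + w k j * ac r j := by
      intro j; rw [hac r hr j x hxp]; ring
    simp only [this, Finset.sum_add_distrib, ← Finset.sum_mul, hA, hC]
    ring
  set S : Finset ℝ := ((Finset.range m).image t) ∪
    ((Finset.range (m+1) ×ˢ (Finset.univ : Finset (Fin n))).image
      (fun p => -C p.1 p.2 / A p.1 p.2)) with hS
  set f : ℝ → ℝ := fun x => (∑ k, c k * relu ((∑ j, w k j * v x j) + b k)) + c₀ with hf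
  have hsub : {x : ℝ | ¬ DifferentiableAt ℝ f x} ⊆ ↑S := by
    intro x hx
    by_contra hxS
    apply hx
    have hxt : ∀ i < m, x ≠ t i := by
      intro i hi he
      exact hxS (Finset.mem_union_left _ (Finset.mem_image.mpr ⟨i, Finset.mem_range.mpr hi, he.symm⟩))
    obtain ⟨r, hrm, U, hU, hxU, hUp⟩ := exists_nice m t x hxt
    set g : ℝ → ℝ := fun y => (∑ k, c k * relu (A r k * y + C r k)) + c₀ with hg
    have hfg : f =ᶠ[nhds x] g := by
      filter_upwards [hU.mem_nhds hxU] with y hy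
      simp only [hf, hg]
      congr 1
      apply Finset.sum_congr rfl
      intro k _
      rw [key r hrm k y (hUp hy)]
    have hgd : DifferentiableAt ℝ g x := by
      apply DifferentiableAt.add_const
      apply DifferentiableAt.fun_sum
      intro k _
      apply DifferentiableAt.const_mul
      by_cases hAk : A r k = 0
      · have : (fun y => relu (A r k * y + C r k)) = fun _ => relu (C r k) := by
          funext y; rw [hAk]; ring_nf
        rw [this]
        exact differentiableAt_const _
      · have hne : A r k * x + C r k ≠ 0 := by
          intro h0
          apply hxS
          apply Finset.mem_union_right
          apply Finset.mem_image.mpr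
          refine ⟨(r, k), Finset.mem_product.mpr ⟨Finset.mem_range.mpr (by omega), Finset.mem_univ k⟩, ?_⟩
          field_simp
          linarith [h0]
        exact (relu_diff hne).comp x ((differentiableAt_id.const_mul _).add_const _)
    exact hgd.congr_of_eventuallyEq hfg
  have hfin : {x : ℝ | ¬ DifferentiableAt ℝ f x}.Finite := S.finite_toSet.subset hsub
  refine ⟨hfin, ?_⟩
  calc {x : ℝ | ¬ DifferentiableAt ℝ f x}.ncard ≤ S.card := by
        rw [← Set.ncard_coe_finset]
        exact Set.ncard_le_ncard hsub S.finite_toSet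
    _ ≤ ((Finset.range m).image t).card +
        (((Finset.range (m+1) ×ˢ (Finset.univ : Finset (Fin n))).image
          (fun p => -C p.1 p.2 / A p.1 p.2)).card) := Finset.card_union_le _ _
    _ ≤ m + (m+1) * n := by
        gcongr
        · exact (Finset.card_image_le).trans (by simp)
        · exact (Finset.card_image_le).trans (by simp [Finset.card_product])
    _ ≤ (n + 1) * m + n := by nlinarith
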